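/- arXiv:2202.09525 — 8 statements merged into one kernel-verified Lean document; each statement's English description precedes it below -/
import Mathlib

section
/- For bounded operators A, B on a complex Hilbert space H, the following are equivalent: (a) AA* ≤ α²BB* for some α ≥ 0; (b) ran(A) ⊆ ran(B); (c) there exists a bounded operator C with A = BC. -/
/-!
(a) ⇒ (b): the inequality says `‖A* x‖ ≤ α ‖B* x‖`. For `y ∈ H` the functional `x ↦ ⟪A y, x⟫`
is bounded by `α ‖y‖ ‖B* x‖`, so it factors through `B*` by a functional on `ran B*`; extending
it by Hahn–Banach and representing it by Riesz gives `w` with `⟪B w, x⟫ = ⟪A y, x⟫`, i.e.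
`A y = B w`.

(b) ⇒ (c): `B` is injective on `(ker B)ᗮ` with the same range, so `A x` has a unique preimage
there; this preimage is linear in `x` and has closed graph, hence is bounded.

(c) ⇒ (a): `‖A* x‖ = ‖C* B* x‖ ≤ ‖C‖ ‖B* x‖`.
-/

open ContinuousLinearMap Filter Topology

theorem StrongDual.exists_comp_eq_of_norm_le {𝕜 E F : Type*} [RCLike 𝕜]
    [AddCommGroup E] [Module 𝕜 E] [NormedAddCommGroup F] [NormedSpace 𝕜 F]
    (g : E →ₗ[𝕜] F) (ψ : E →ₗ[𝕜] 𝕜) {c : ℝ} (h : ∀ x, ‖ψ x‖ ≤ c * ‖g x‖) :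
    ∃ Φ : StrongDual 𝕜 F, ∀ x, Φ (g x) = ψ x := by
  have hker : LinearMap.ker g ≤ LinearMap.ker ψ := fun x hx ↦ by
    simpa [LinearMap.mem_ker.mp hx] using h x
  let φ : LinearMap.range g →ₗ[𝕜] 𝕜 :=
    (LinearMap.ker g).liftQ ψ hker ∘ₗ g.quotKerEquivRange.symm.toLinearMap
  have hφ (x : E) : φ ⟨g x, x, rfl⟩ = ψ x := by
    simp [φ, g.quotKerEquivRange_symm_apply_image x ⟨x, rfl⟩]
  have hbound : ∀ z, ‖φ z‖ ≤ c * ‖z‖ := by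
    rintro ⟨_, x, rfl⟩
    exact (hφ x).symm ▸ h x
  obtain ⟨Φ, hΦ, -⟩ := exists_extension_norm_eq _ (φ.mkContinuous c hbound)
  exact ⟨Φ, fun x ↦ (hΦ ⟨g x, x, rfl⟩).trans (hφ x)⟩

namespace ContinuousLinearMap

theorem exists_eq_comp_of_injective_of_range_le {𝕜 E F G : Type*} [NontriviallyNormedField 𝕜]
    [NormedAddCommGroup E] [NormedSpace 𝕜 E] [CompleteSpace E]
    [NormedAddCommGroup F] [NormedSpace 𝕜 F] [CompleteSpace F]
    [NormedAddCommGroup G] [NormedSpace 𝕜 G]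
    {A : E →L[𝕜] G} {B : F →L[𝕜] G} (hB : Function.Injective B) (h : A.range ≤ B.range) :
    ∃ C : E →L[𝕜] F, A = B ∘L C := by
  let C : E →ₗ[𝕜] F := (LinearEquiv.ofInjective _ hB).symm.toLinearMap ∘ₗ
    (A : E →ₗ[𝕜] G).codRestrict _ fun x ↦ h ⟨x, rfl⟩
  have hC (x : E) : B (C x) = A x := by
    rw [← coe_coe, ← LinearEquiv.ofInjective_apply _ (h := hB)]
    simp [C]
  have hclosed : ∀ (u : ℕ → E) x y, Tendsto u atTop (𝓝 x) → Tendsto (C ∘ u) atTop (𝓝 y) →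
      y = C x := fun u x y hu hCu ↦ hB <| by
    refine tendsto_nhds_unique ((B.continuous.tendsto y).comp hCu) ?_
    simpa [Function.comp_def, hC] using (A.continuous.tendsto x).comp hu
  exact ⟨.ofSeqClosedGraph hclosed, ext fun x ↦ (hC x).symm⟩

variable {𝕜 E F G : Type*} [RCLike 𝕜]
  [NormedAddCommGroup E] [InnerProductSpace 𝕜 E]
  [NormedAddCommGroup F] [InnerProductSpace 𝕜 F]
  [NormedAddCommGroup G] [InnerProductSpace 𝕜 G]

theorem injective_comp_subtypeL_orthogonal_ker (B : F →L[𝕜] G) :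
    Function.Injective (B ∘L B.kerᗮ.subtypeL) := by
  refine (injective_iff_map_eq_zero _).mpr fun z hz ↦ ?_
  exact Subtype.ext (Submodule.disjoint_def.mp B.ker.orthogonal_disjoint z hz z.2)

theorem range_comp_subtypeL_orthogonal_ker [CompleteSpace F] (B : F →L[𝕜] G) :
    (B ∘L B.kerᗮ.subtypeL).range = B.range := by
  refine le_antisymm (LinearMap.range_comp_le_range _ _) ?_
  rintro _ ⟨y, rfl⟩
  refine ⟨⟨y - B.ker.starProjection y, B.ker.sub_starProjection_mem_orthogonal y⟩, ?_⟩
  have hK : B (B.ker.starProjection y) = 0 := B.ker.starProjection_apply_mem y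
  change B (y - _) = B y
  rw [map_sub, hK, sub_zero]

theorem exists_eq_comp_of_range_le [CompleteSpace E] [CompleteSpace F]
    {A : E →L[𝕜] G} {B : F →L[𝕜] G} (h : A.range ≤ B.range) :
    ∃ C : E →L[𝕜] F, A = B ∘L C := by
  obtain ⟨C, hC⟩ := exists_eq_comp_of_injective_of_range_le
    (injective_comp_subtypeL_orthogonal_ker B) (h.trans (range_comp_subtypeL_orthogonal_ker B).ge)
  exact ⟨B.kerᗮ.subtypeL ∘L C, hC⟩

variable [CompleteSpace E] [CompleteSpace F] [CompleteSpace G]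

theorem reApplyInnerSelf_comp_adjoint (B : F →L[𝕜] G) (x : G) :
    (B ∘L adjoint B).reApplyInnerSelf x = ‖adjoint B x‖ ^ 2 := by
  rw [apply_norm_sq_eq_inner_adjoint_left, adjoint_adjoint]
  rfl

theorem isPositive_sq_smul_comp_adjoint_sub_iff (A : E →L[𝕜] G) (B : F →L[𝕜] G) {α : ℝ}
    (hα : 0 ≤ α) :
    (((α : 𝕜) ^ 2) • (B ∘L adjoint B) - A ∘L adjoint A).IsPositive ↔
      ∀ x, ‖adjoint A x‖ ≤ α * ‖adjoint B x‖ := by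
  have hsym : (((α : 𝕜) ^ 2) • (B ∘L adjoint B) - A ∘L adjoint A).IsSymmetric :=
    ((isPositive_self_comp_adjoint B).isSymmetric.smul (by rw [map_pow, RCLike.conj_ofReal])).sub
      (isPositive_self_comp_adjoint A).isSymmetric
  have hre (x : G) : (((α : 𝕜) ^ 2) • (B ∘L adjoint B) - A ∘L adjoint A).reApplyInnerSelf x =
      (α * ‖adjoint B x‖) ^ 2 - ‖adjoint A x‖ ^ 2 := by
    rw [mul_pow, ← reApplyInnerSelf_comp_adjoint, ← reApplyInnerSelf_comp_adjoint]
    simp [reApplyInnerSelf, inner_sub_left, inner_smul_left]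
  simp only [isPositive_def, hsym, true_and, hre, sub_nonneg]
  exact forall_congr' fun x ↦ pow_le_pow_iff_left₀ (norm_nonneg _) (by positivity) two_ne_zero

theorem range_le_range_of_norm_adjoint_le {A : E →L[𝕜] G} {B : F →L[𝕜] G} {α : ℝ}
    (h : ∀ x, ‖adjoint A x‖ ≤ α * ‖adjoint B x‖) : A.range ≤ B.range := by
  rintro _ ⟨y, rfl⟩
  have hbound (x : G) : ‖innerSL 𝕜 (A y) x‖ ≤ (‖y‖ * α) * ‖adjoint B x‖ := calc
    ‖innerSL 𝕜 (A y) x‖ = ‖inner 𝕜 y (adjoint A x)‖ := by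
      rw [innerSL_apply_apply, adjoint_inner_right]
    _ ≤ ‖y‖ * ‖adjoint A x‖ := norm_inner_le_norm _ _
    _ ≤ ‖y‖ * (α * ‖adjoint B x‖) := by gcongr; exact h x
    _ = (‖y‖ * α) * ‖adjoint B x‖ := by ring
  obtain ⟨Φ, hΦ⟩ := StrongDual.exists_comp_eq_of_norm_le (adjoint B : G →ₗ[𝕜] F)
    (innerSL 𝕜 (A y) : G →ₗ[𝕜] 𝕜) hbound
  refine ⟨(InnerProductSpace.toDual 𝕜 F).symm Φ, ext_inner_right 𝕜 fun x ↦ ?_⟩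
  simpa [← adjoint_inner_right B, InnerProductSpace.toDual_symm_apply] using hΦ x

theorem norm_adjoint_le_of_eq_comp {A : E →L[𝕜] G} {B : F →L[𝕜] G} {C : E →L[𝕜] F}
    (hC : A = B ∘L C) (x : G) : ‖adjoint A x‖ ≤ ‖C‖ * ‖adjoint B x‖ := by
  rw [hC, adjoint_comp, comp_apply, ← adjoint.norm_map C]
  exact le_opNorm _ _

end ContinuousLinearMap

/-- **Douglas's range inclusion theorem.** For bounded operators `A, B` on a complex
Hilbert space `H`, the following are equivalent:
(a) `A A* ≤ α² B B*` for some `α ≥ 0`; (b) `ran A ⊆ ran B`;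
(c) there is a bounded operator `C` with `A = B C`. -/
theorem douglas_range_inclusion {H : Type*} [NormedAddCommGroup H]
    [InnerProductSpace ℂ H] [CompleteSpace H] (A B : H →L[ℂ] H) :
    ((∃ α : ℝ, 0 ≤ α ∧
        (((α : ℂ) ^ 2) • (B ∘L adjoint B) - A ∘L adjoint A).IsPositive) ↔
      LinearMap.range (A : H →ₗ[ℂ] H) ≤ LinearMap.range (B : H →ₗ[ℂ] H)) ∧
    (LinearMap.range (A : H →ₗ[ℂ] H) ≤ LinearMap.range (B : H →ₗ[ℂ] H) ↔
      ∃ C : H →L[ℂ] H, A = B ∘L C) := by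
  have range_iff_comp : A.range ≤ B.range ↔ ∃ C : H →L[ℂ] H, A = B ∘L C :=
    ⟨exists_eq_comp_of_range_le, fun ⟨C, hC⟩ ↦ hC ▸ LinearMap.range_comp_le_range _ _⟩
  refine ⟨⟨fun ⟨α, hα, hpos⟩ ↦ ?_, fun hAB ↦ ?_⟩, range_iff_comp⟩
  · exact range_le_range_of_norm_adjoint_le
      ((isPositive_sq_smul_comp_adjoint_sub_iff A B hα).mp hpos)
  · obtain ⟨C, hC⟩ := range_iff_comp.mp hAB
    exact ⟨‖C‖, norm_nonneg C, (isPositive_sq_smul_comp_adjoint_sub_iff A B (norm_nonneg C)).mpr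
      (norm_adjoint_le_of_eq_comp hC)⟩
end

section
/- For a bounded operator T on a complex Hilbert space, ran(T) ⊆ ran(T*) if and only if there exists α ≥ 0 such that ‖T*x‖ ≤ α‖Tx‖ for every x in H. -/
/-!
This is the case `A = T`, `B = T†` of Douglas' lemma: `ran A ⊆ ran B` iff `‖A† x‖ ≤ α ‖B† x‖`.
If `ran A ⊆ ran B`, inverting `B` on `(ker B)ᗮ` gives a factorization `A = B C`, and `C` is
bounded by the closed graph theorem, so `A† = C† B†`. Conversely, the bound makes
`B† y ↦ ⟪A x, y⟫` a bounded functional on `ran B†`; a Hahn–Banach extension of it is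
represented by some `w`, and then `B w = A x`.
-/

open ContinuousLinearMap

theorem LinearMap.exists_comp_eq_of_ker_le {R M M₂ M₃ : Type*} [Ring R] [AddCommGroup M]
    [Module R M] [AddCommGroup M₂] [Module R M₂] [AddCommGroup M₃] [Module R M₃]
    {f : M →ₗ[R] M₂} {g : M →ₗ[R] M₃} (h : LinearMap.ker f ≤ LinearMap.ker g) :
    ∃ g' : LinearMap.range f →ₗ[R] M₃, ∀ x, g' ⟨f x, LinearMap.mem_range_self f x⟩ = g x :=
  ⟨(LinearMap.ker f).liftQ g h ∘ₗ f.quotKerEquivRange.symm.toLinearMap, fun x => by simp⟩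

theorem LinearMap.exists_strongDual_comp_eq_of_norm_le {𝕜 V W : Type*} [RCLike 𝕜]
    [AddCommGroup V] [Module 𝕜 V] [NormedAddCommGroup W] [NormedSpace 𝕜 W]
    {f : V →ₗ[𝕜] W} {g : V →ₗ[𝕜] 𝕜}
    {c : ℝ} (h : ∀ v, ‖g v‖ ≤ c * ‖f v‖) : ∃ φ : StrongDual 𝕜 W, ∀ v, φ (f v) = g v := by
  have hker : LinearMap.ker f ≤ LinearMap.ker g := fun v hv => by
    simpa [show f v = 0 from hv] using h v
  obtain ⟨g', hg'⟩ := LinearMap.exists_comp_eq_of_ker_le hker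
  have hbound : ∀ w, ‖g' w‖ ≤ c * ‖(w : W)‖ := by
    rintro ⟨_, v, rfl⟩
    simpa only [hg'] using h v
  obtain ⟨φ, hφ, -⟩ := exists_extension_norm_eq _ (g'.mkContinuous c hbound)
  exact ⟨φ, fun v => (hφ ⟨f v, LinearMap.mem_range_self f v⟩).trans (hg' v)⟩

namespace ContinuousLinearMap

theorem exists_comp_eq_of_range_le_of_injective {𝕜 E F G : Type*} [NontriviallyNormedField 𝕜]
    [NormedAddCommGroup E] [NormedSpace 𝕜 E] [CompleteSpace E]
    [NormedAddCommGroup F] [NormedSpace 𝕜 F]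
    [NormedAddCommGroup G] [NormedSpace 𝕜 G] [CompleteSpace G]
    {A : E →L[𝕜] F} {B : G →L[𝕜] F} (hB : Function.Injective B)
    (h : LinearMap.range (A : E →ₗ[𝕜] F) ≤ LinearMap.range (B : G →ₗ[𝕜] F)) :
    ∃ C : E →L[𝕜] G, B ∘L C = A := by
  let e := LinearEquiv.ofInjective (B : G →ₗ[𝕜] F) hB
  let C : E →ₗ[𝕜] G :=
    e.symm ∘ₗ (A : E →ₗ[𝕜] F).codRestrict _ fun x => h (LinearMap.mem_range_self _ x)
  have hBC : ∀ x, B (C x) = A x := fun x =>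
    congrArg Subtype.val (e.apply_symm_apply ⟨A x, _⟩)
  have hC : Continuous C := C.continuous_of_seq_closed_graph fun u x y hu hCu => by
    refine hB ?_
    rw [hBC]
    refine tendsto_nhds_unique ((B.continuous.tendsto y).comp hCu) ?_
    simpa only [Function.comp_def, hBC] using (A.continuous.tendsto x).comp hu
  exact ⟨⟨C, hC⟩, ContinuousLinearMap.ext hBC⟩

variable {𝕜 E F G : Type*} [RCLike 𝕜]
    [NormedAddCommGroup E] [InnerProductSpace 𝕜 E] [CompleteSpace E]
    [NormedAddCommGroup F] [InnerProductSpace 𝕜 F]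
    [NormedAddCommGroup G] [InnerProductSpace 𝕜 G] [CompleteSpace G]

theorem exists_comp_eq_of_range_le {A : E →L[𝕜] F} {B : G →L[𝕜] F}
    (h : LinearMap.range (A : E →ₗ[𝕜] F) ≤ LinearMap.range (B : G →ₗ[𝕜] F)) :
    ∃ C : E →L[𝕜] G, B ∘L C = A := by
  set N := LinearMap.ker (B : G →ₗ[𝕜] F)
  have : CompleteSpace N := B.isClosed_ker.completeSpace_coe
  have hinj : Function.Injective (B ∘L Nᗮ.subtypeL) :=
    (injective_iff_map_eq_zero _).2 fun y hy =>
      Submodule.coe_eq_zero.1 (Submodule.disjoint_def.1 N.orthogonal_disjoint y hy y.2)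
  have hrange :
      LinearMap.range (A : E →ₗ[𝕜] F) ≤ LinearMap.range (B ∘L Nᗮ.subtypeL).toLinearMap := by
    rintro _ ⟨x, rfl⟩
    obtain ⟨w, hw⟩ := h ⟨x, rfl⟩
    obtain ⟨p, hp, q, hq, rfl⟩ := N.exists_add_mem_mem_orthogonal w
    exact ⟨⟨q, hq⟩, by simpa [show B p = 0 from hp] using hw⟩
  obtain ⟨C, hC⟩ := exists_comp_eq_of_range_le_of_injective hinj hrange
  exact ⟨Nᗮ.subtypeL ∘L C, hC⟩

theorem range_le_range_iff_norm_adjoint_le [CompleteSpace F] (A : E →L[𝕜] F) (B : G →L[𝕜] F) :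
    LinearMap.range (A : E →ₗ[𝕜] F) ≤ LinearMap.range (B : G →ₗ[𝕜] F) ↔
      ∃ α : ℝ, 0 ≤ α ∧ ∀ x, ‖adjoint A x‖ ≤ α * ‖adjoint B x‖ := by
  constructor
  · intro h
    obtain ⟨C, rfl⟩ := exists_comp_eq_of_range_le h
    refine ⟨‖adjoint C‖, norm_nonneg _, fun x => ?_⟩
    rw [adjoint_comp]
    exact (adjoint C).le_opNorm _
  · rintro ⟨α, -, hα⟩ _ ⟨x, rfl⟩
    have hbound : ∀ y, ‖innerSL 𝕜 (A x) y‖ ≤ ‖x‖ * α * ‖adjoint B y‖ := fun y =>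
      calc ‖innerSL 𝕜 (A x) y‖ = ‖inner 𝕜 x (adjoint A y)‖ := by
            rw [innerSL_apply_apply, adjoint_inner_right]
        _ ≤ ‖x‖ * ‖adjoint A y‖ := norm_inner_le_norm _ _
        _ ≤ ‖x‖ * α * ‖adjoint B y‖ := by
            rw [mul_assoc]; exact mul_le_mul_of_nonneg_left (hα y) (norm_nonneg x)
    obtain ⟨φ, hφ⟩ := LinearMap.exists_strongDual_comp_eq_of_norm_le
      (f := (adjoint B : F →ₗ[𝕜] G)) (g := (innerSL 𝕜 (A x) : F →ₗ[𝕜] 𝕜)) hbound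
    refine ⟨(InnerProductSpace.toDual 𝕜 G).symm φ, ext_inner_right 𝕜 fun y => ?_⟩
    change inner 𝕜 (B _) y = inner 𝕜 (A x) y
    rw [← adjoint_inner_right, InnerProductSpace.toDual_symm_apply]
    exact hφ y

end ContinuousLinearMap

/-- For a bounded operator `T` on a complex Hilbert space, `ran T ⊆ ran T*` iff
there exists `α ≥ 0` with `‖T* x‖ ≤ α ‖T x‖` for all `x`. -/
theorem range_le_range_adjoint_iff_norm_adjoint_le {H : Type*} [NormedAddCommGroup H]
    [InnerProductSpace ℂ H] [CompleteSpace H] (T : H →L[ℂ] H) :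
    LinearMap.range (T : H →ₗ[ℂ] H) ≤ LinearMap.range (adjoint T : H →ₗ[ℂ] H) ↔
      ∃ α : ℝ, 0 ≤ α ∧ ∀ x : H, ‖adjoint T x‖ ≤ α * ‖T x‖ := by
  simpa only [adjoint_adjoint] using range_le_range_iff_norm_adjoint_le T (adjoint T)
end

section
/- For a bounded operator T on a complex Hilbert space, TT* ≤ α²T*T for some α ≥ 0 if and only if there exists a nonnegative bounded operator Q with TT* = T*QT. -/
/-!
`T T* ≤ α² T* T` says exactly that `‖T* x‖ ≤ α ‖T x‖` for all `x`. Such a bound lets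
`T x ↦ T* x` define a bounded operator on the range of `T`; extending it to the closure of the
range and precomposing with the orthogonal projection gives `A` with `T* = A T`, so that
`T T* = T* (A* A) T`. Conversely, in the C⋆-algebra of operators `T* Q T ≤ ‖Q‖ T* T` for
every nonnegative `Q`.
-/

open ContinuousLinearMap

namespace ContinuousLinearMap

variable {𝕜 E F G : Type*} [RCLike 𝕜]

-- Douglas' lemma: majorization implies factorization.
theorem exists_eq_comp_of_norm_le_mul [NormedAddCommGroup E] [NormedSpace 𝕜 E]
    [NormedAddCommGroup F] [NormedSpace 𝕜 F] [CompleteSpace F]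
    [NormedAddCommGroup G] [InnerProductSpace 𝕜 G] [CompleteSpace G]
    (B : E →L[𝕜] F) (A : E →L[𝕜] G) (C : ℝ) (h : ∀ x, ‖B x‖ ≤ C * ‖A x‖) :
    ∃ D : G →L[𝕜] F, B = D ∘L A := by
  set K := (LinearMap.range (A : E →ₗ[𝕜] G)).topologicalClosure
  let e : E →ₗ[𝕜] K := (A : E →ₗ[𝕜] G).codRestrict K
    fun x => Submodule.le_topologicalClosure _ (LinearMap.mem_range_self _ x)
  have he : DenseRange e := by
    rw [DenseRange, Subtype.dense_iff, ← Set.range_comp]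
    exact (Submodule.topologicalClosure_coe _).subset
  refine ⟨((B : E →ₗ[𝕜] F).extendOfNorm e) ∘L K.orthogonalProjectionOnto, ?_⟩
  ext x
  have hx : K.orthogonalProjectionOnto (A x) = e x :=
    K.orthogonalProjectionOnto_mem_subspace_eq_self (e x)
  simp only [comp_apply, hx]
  exact (LinearMap.extendOfNorm_eq he ⟨C, h⟩ x).symm

theorem adjoint_comp_self_le_smul_iff [NormedAddCommGroup E] [InnerProductSpace 𝕜 E]
    [CompleteSpace E] [NormedAddCommGroup F] [InnerProductSpace 𝕜 F] [CompleteSpace F]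
    (A B : E →L[𝕜] F) {c : ℝ} (hc : 0 ≤ c) :
    adjoint A ∘L A ≤ ((c : 𝕜) ^ 2) • (adjoint B ∘L B) ↔ ∀ x, ‖A x‖ ≤ c * ‖B x‖ := by
  have hsa : IsSelfAdjoint (((c : 𝕜) ^ 2) • (adjoint B ∘L B) - adjoint A ∘L A) :=
    (IsSelfAdjoint.smul (by simp [IsSelfAdjoint, RCLike.star_def])
      (isPositive_adjoint_comp_self B).isSelfAdjoint).sub
      (isPositive_adjoint_comp_self A).isSelfAdjoint
  rw [le_def, isPositive_def', and_iff_right hsa]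
  refine forall_congr' fun x => ?_
  rw [reApplyInnerSelf_apply, sub_apply, inner_sub_left, map_sub, smul_apply, inner_smul_left,
    sub_nonneg, ← apply_norm_sq_eq_inner_adjoint_left, map_pow, RCLike.conj_ofReal,
    ← RCLike.ofReal_pow, RCLike.re_ofReal_mul, ← apply_norm_sq_eq_inner_adjoint_left, ← mul_pow,
    sq_le_sq₀ (norm_nonneg _) (by positivity)]

end ContinuousLinearMap

/-- `T T* ≤ α² T* T` for some `α ≥ 0` iff there is a nonnegative bounded operator `Q`
with `T T* = T* Q T`. -/
theorem posinormal_iff_exists_nonneg_factor {H : Type*} [NormedAddCommGroup H]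
    [InnerProductSpace ℂ H] [CompleteSpace H] (T : H →L[ℂ] H) :
    (∃ α : ℝ, 0 ≤ α ∧
        (((α : ℂ) ^ 2) • (adjoint T ∘L T) - T ∘L adjoint T).IsPositive) ↔
      ∃ Q : H →L[ℂ] H, Q.IsPositive ∧
        T ∘L adjoint T = adjoint T ∘L Q ∘L T := by
  simp only [← le_def]
  constructor
  · rintro ⟨α, hα, hle⟩
    obtain ⟨A, hA⟩ := exists_eq_comp_of_norm_le_mul (adjoint T) T α
      ((adjoint_comp_self_le_smul_iff _ _ hα).1 (by rwa [adjoint_adjoint]))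
    refine ⟨adjoint A ∘L A, isPositive_adjoint_comp_self A, ?_⟩
    calc T ∘L adjoint T = adjoint (A ∘L T) ∘L (A ∘L T) := by rw [← hA, adjoint_adjoint]
      _ = adjoint T ∘L (adjoint A ∘L A) ∘L T := by rw [adjoint_comp]; rfl
  · rintro ⟨Q, hQ, hfac⟩
    refine ⟨√‖Q‖, Real.sqrt_nonneg _, ?_⟩
    calc T ∘L adjoint T = adjoint T ∘L Q ∘L T := hfac
      _ ≤ ‖Q‖ • (adjoint T ∘L T) := CStarAlgebra.star_left_conjugate_le_norm_smul hQ.isSelfAdjoint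
      _ = ((√‖Q‖ : ℂ) ^ 2) • (adjoint T ∘L T) := by
        rw [← Complex.ofReal_pow, Real.sq_sqrt (norm_nonneg _), Complex.coe_smul]
end

section
/- Let T be a bounded operator on a Hilbert space such that ran(T^n) is closed for every n ≥ 1. If T is posinormal (ran(T) ⊆ ran(T*)) and T is coposinormal (ran(T*) ⊆ ran(T)), then T^n is posinormal and coposinormal for every n ≥ 1, i.e., ran(T^n) = ran(T*^n). -/
open ContinuousLinearMap

/-!
`R := ran T = ran T*` is closed, and `ker T = (ran T*)ᗮ = Rᗮ`, `ker T* = (ran T)ᗮ = Rᗮ`.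
Splitting `H = R ⊕ Rᗮ`, both `T` and `T*` therefore map `R` onto `R`, so every power of
either operator again has range `R`.
-/

theorem LinearMap.range_pow_succ_eq_range_of_map_range {R M : Type*} [Semiring R] [AddCommMonoid M]
    [Module R M] {f : Module.End R M} (h : (range f).map f = range f) (n : ℕ) :
    range (f ^ (n + 1)) = range f := by
  induction n with
  | zero => rw [zero_add, pow_one]
  | succ n ih => rw [pow_succ', Module.End.mul_eq_comp, range_comp, ih, h]

theorem Submodule.map_eq_range_of_orthogonal_le_ker {𝕜 E F : Type*} [RCLike 𝕜]
    [NormedAddCommGroup E] [InnerProductSpace 𝕜 E] [AddCommMonoid F] [Module 𝕜 F]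
    (K : Submodule 𝕜 E) [K.HasOrthogonalProjection] {f : E →ₗ[𝕜] F}
    (h : Kᗮ ≤ LinearMap.ker f) : K.map f = LinearMap.range f := by
  rw [LinearMap.range_eq_map, ← K.sup_orthogonal_of_hasOrthogonalProjection, Submodule.map_sup,
    LinearMap.le_ker_iff_map.mp h, sup_bot_eq]

theorem ContinuousLinearMap.range_pow_eq_range_of_range_adjoint_le {𝕜 E : Type*} [RCLike 𝕜]
    [NormedAddCommGroup E] [InnerProductSpace 𝕜 E] [CompleteSpace E] {S : E →L[𝕜] E}
    (hS : IsClosed (S.range : Set E)) (h : (adjoint S).range ≤ S.range) {n : ℕ} (hn : n ≠ 0) :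
    ((S ^ n : E →L[𝕜] E) : E →ₗ[𝕜] E).range = S.range := by
  have : CompleteSpace S.range := hS.completeSpace_coe
  have hker : S.rangeᗮ ≤ S.ker := by
    simpa [(adjoint S).orthogonal_range] using Submodule.orthogonal_le h
  obtain ⟨n, rfl⟩ := Nat.exists_eq_succ_of_ne_zero hn
  rw [toLinearMap_pow]
  exact LinearMap.range_pow_succ_eq_range_of_map_range
    (S.range.map_eq_range_of_orthogonal_le_ker hker) n

/-- Suppose `ran (T ^ n)` is closed for every `n ≥ 1`. If `T` is posinormal
(`ran T ⊆ ran T*`) and coposinormal (`ran T* ⊆ ran T`), then every power `T ^ n`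
is posinormal and coposinormal: `ran (T ^ n) = ran (T*^n)`. -/
theorem pow_posinormal_coposinormal {H : Type*} [NormedAddCommGroup H]
    [InnerProductSpace ℂ H] [CompleteSpace H] (T : H →L[ℂ] H)
    (hcl : ∀ n : ℕ, 1 ≤ n → IsClosed (Set.range (T ^ n)))
    (hpos : LinearMap.range (T : H →ₗ[ℂ] H) ≤ LinearMap.range (adjoint T : H →ₗ[ℂ] H))
    (hcop : LinearMap.range (adjoint T : H →ₗ[ℂ] H) ≤ LinearMap.range (T : H →ₗ[ℂ] H)) :
    ∀ n : ℕ, 1 ≤ n →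
      LinearMap.range ((T ^ n : H →L[ℂ] H) : H →ₗ[ℂ] H) = LinearMap.range (((adjoint T) ^ n : H →L[ℂ] H) : H →ₗ[ℂ] H) := by
  intro n hn
  have hT : IsClosed (T.range : Set H) := by simpa [LinearMap.coe_range] using hcl 1 le_rfl
  have hranges : (adjoint T).range = T.range := le_antisymm hcop hpos
  have hTadj : IsClosed ((adjoint T).range : Set H) := hranges ▸ hT
  rw [range_pow_eq_range_of_range_adjoint_le hT hcop (by omega),
    range_pow_eq_range_of_range_adjoint_le hTadj (by rwa [adjoint_adjoint]) (by omega), hranges]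
end

section
/- Let S be an injective unilateral weighted shift on ℓ²(ℕ) with weight sequence (ω_k), ω_k ≠ 0. Then for each n ≥ 1, S^n is posinormal if and only if sup over j ≥ 0 of (∏_{k=j+1}^{n+j}|ω_k|)/(∏_{k=n+j+1}^{2n+j}|ω_k|) < ∞; consequently, if S is posinormal (sup_k |ω_k|/|ω_{k+1}| < ∞), then S^n is posinormal for every n ≥ 1. -/
/-!
`S ^ n` is again a weighted shift, moving `e j` to `e (j + n)` with weight
`β j = ω j ⋯ ω (j + n - 1)`, and its adjoint sends `e (j + n)` to `conj (β j) • e j`.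
Testing posinormality on `e (j + n)` therefore forces `‖β j‖ ≤ α ‖β (j + n)‖`. Conversely, that
bound compares the Parseval expansion of `‖(S ^ n)† x‖²`, whose `j`-th term is
`‖β j‖² ‖⟪e (j + n), x⟫‖²`, term by term with the Bessel sum of the coefficients of `S ^ n x`
at the indices `j + 2n`, which are `β (j + n) ⟪e (j + n), x⟫`.
If `‖ω k‖ ≤ C ‖ω (k + 1)‖` for all `k`, iterating gives `‖β j‖ ≤ C ^ (n * n) ‖β (j + n)‖`.
-/

open ContinuousLinearMap

open scoped InnerProductSpace ComplexConjugate

section HilbertSpace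

variable {𝕜 H : Type*} [RCLike 𝕜] [NormedAddCommGroup H] [InnerProductSpace 𝕜 H]

theorem HilbertBasis.hasSum_norm_inner_sq {ι : Type*} (b : HilbertBasis ι 𝕜 H) (x : H) :
    HasSum (fun i => ‖⟪b i, x⟫_𝕜‖ ^ 2) (‖x‖ ^ 2) := by
  simpa [b.repr_apply_apply] using lp.hasSum_norm (p := 2) (by norm_num) (b.repr x)

theorem pow_apply_of_apply_succ {S : H →L[𝕜] H} {v : ℕ → H} {ω : ℕ → 𝕜}
    (hS : ∀ k, S (v k) = ω k • v (k + 1)) (n j : ℕ) :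
    (S ^ n) (v j) = (∏ i ∈ Finset.range n, ω (j + i)) • v (j + n) := by
  induction n with
  | zero => simp
  | succ n ih =>
    rw [pow_succ', mul_apply_eq_comp, ih, map_smul, hS, smul_smul, Finset.prod_range_succ,
      mul_comm, add_assoc]

variable [CompleteSpace H]

def IsPosinormal (T : H →L[𝕜] H) : Prop :=
  ∃ α : ℝ, 0 ≤ α ∧ ∀ x, ‖adjoint T x‖ ≤ α * ‖T x‖

section ShiftByN

variable (e : HilbertBasis ℕ 𝕜 H) {T : H →L[𝕜] H} {β : ℕ → 𝕜} {n : ℕ}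

theorem adjoint_apply_basis_add (hT : ∀ j, T (e j) = β j • e (j + n)) (j : ℕ) :
    adjoint T (e (j + n)) = conj (β j) • e j := by
  refine e.repr.injective (lp.ext (funext fun k => ?_))
  rw [e.repr_apply_apply, e.repr_apply_apply, adjoint_inner_right, hT, inner_smul_left,
    inner_smul_right, orthonormal_iff_ite.mp e.orthonormal,
    orthonormal_iff_ite.mp e.orthonormal]
  by_cases hkj : k = j <;> simp [hkj]

theorem inner_basis_add_apply (hT : ∀ j, T (e j) = β j • e (j + n)) (j : ℕ) (x : H) :
    ⟪e (j + n), T x⟫_𝕜 = β j * ⟪e j, x⟫_𝕜 := by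
  rw [← adjoint_inner_left, adjoint_apply_basis_add e hT, inner_smul_left, RCLike.conj_conj]

theorem hasSum_norm_adjoint_apply_sq (hT : ∀ j, T (e j) = β j • e (j + n)) (x : H) :
    HasSum (fun j => ‖β j‖ ^ 2 * ‖⟪e (j + n), x⟫_𝕜‖ ^ 2) (‖adjoint T x‖ ^ 2) := by
  convert e.hasSum_norm_inner_sq (adjoint T x) using 2 with j
  rw [adjoint_inner_right, hT, inner_smul_left, norm_mul, RCLike.norm_conj, mul_pow]

theorem norm_adjoint_apply_le (hT : ∀ j, T (e j) = β j • e (j + n)) {C : ℝ} (hC₀ : 0 ≤ C)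
    (hC : ∀ j, ‖β j‖ ≤ C * ‖β (j + n)‖) (x : H) : ‖adjoint T x‖ ≤ C * ‖T x‖ := by
  have hv : Orthonormal 𝕜 fun j => e (j + n + n) :=
    e.orthonormal.comp _ fun i j h => by simpa using h
  have hcoeff (j : ℕ) :
      ‖β j‖ ^ 2 * ‖⟪e (j + n), x⟫_𝕜‖ ^ 2 ≤ C ^ 2 * ‖⟪e (j + n + n), T x⟫_𝕜‖ ^ 2 := by
    rw [inner_basis_add_apply e hT, norm_mul, mul_pow, ← mul_assoc, ← mul_pow C]
    gcongr
    exact hC j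
  have hsq : ‖adjoint T x‖ ^ 2 ≤ (C * ‖T x‖) ^ 2 := calc
    ‖adjoint T x‖ ^ 2 = ∑' j, ‖β j‖ ^ 2 * ‖⟪e (j + n), x⟫_𝕜‖ ^ 2 :=
      (hasSum_norm_adjoint_apply_sq e hT x).tsum_eq.symm
    _ ≤ ∑' j, C ^ 2 * ‖⟪e (j + n + n), T x⟫_𝕜‖ ^ 2 :=
      (hasSum_norm_adjoint_apply_sq e hT x).summable.tsum_le_tsum hcoeff
        ((hv.inner_products_summable (T x)).mul_left _)
    _ = C ^ 2 * ∑' j, ‖⟪e (j + n + n), T x⟫_𝕜‖ ^ 2 := tsum_mul_left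
    _ ≤ C ^ 2 * ‖T x‖ ^ 2 := by gcongr; exact hv.tsum_inner_products_le (T x)
    _ = (C * ‖T x‖) ^ 2 := by ring
  exact (pow_le_pow_iff_left₀ (norm_nonneg _) (by positivity) two_ne_zero).mp hsq

theorem isPosinormal_iff_of_apply_basis (hT : ∀ j, T (e j) = β j • e (j + n)) :
    IsPosinormal T ↔ ∃ C : ℝ, ∀ j, ‖β j‖ ≤ C * ‖β (j + n)‖ := by
  constructor
  · rintro ⟨α, -, hα⟩
    refine ⟨α, fun j => ?_⟩
    simpa [adjoint_apply_basis_add e hT, hT, norm_smul, e.orthonormal.1] using hα (e (j + n))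
  · rintro ⟨C, hC⟩
    refine ⟨max C 0, le_max_right C 0, norm_adjoint_apply_le e hT (le_max_right C 0)
      fun j => (hC j).trans ?_⟩
    gcongr
    exact le_max_left C 0

end ShiftByN

end HilbertSpace

theorem le_pow_mul_add_of_le_mul_succ {a : ℕ → ℝ} {C : ℝ} (hC : 0 ≤ C)
    (h : ∀ k, a k ≤ C * a (k + 1)) (k m : ℕ) : a k ≤ C ^ m * a (k + m) := by
  induction m with
  | zero => simp
  | succ m ih => calc
    a k ≤ C ^ m * a (k + m) := ih
    _ ≤ C ^ m * (C * a (k + m + 1)) := by gcongr; exact h _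
    _ = C ^ (m + 1) * a (k + (m + 1)) := by rw [← add_assoc]; ring

theorem prod_range_le_pow_mul_prod_range_add {a : ℕ → ℝ} (ha : ∀ k, 0 ≤ a k) {C : ℝ}
    (hC : 0 ≤ C) (h : ∀ k, a k ≤ C * a (k + 1)) (n j : ℕ) :
    ∏ i ∈ Finset.range n, a (j + i) ≤ C ^ (n * n) * ∏ i ∈ Finset.range n, a (j + n + i) := calc
  ∏ i ∈ Finset.range n, a (j + i) ≤ ∏ i ∈ Finset.range n, C ^ n * a (j + n + i) := by
    refine Finset.prod_le_prod (fun i _ => ha _) fun i _ => ?_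
    rw [add_right_comm]
    exact le_pow_mul_add_of_le_mul_succ hC h _ _
  _ = C ^ (n * n) * ∏ i ∈ Finset.range n, a (j + n + i) := by
    rw [Finset.prod_mul_distrib, Finset.prod_const, Finset.card_range, ← pow_mul]

/-- Let `S` be an injective unilateral weighted shift (`S eₖ = ωₖ e_{k+1}`, all
`ωₖ ≠ 0`) on a Hilbert space with orthonormal basis `(eₖ)`. For each `n ≥ 1`,
`S ^ n` is posinormal iff
`sup_j (∏_{i<n} |ω_{j+i}|) / (∏_{i<n} |ω_{n+j+i}|) < ∞`; consequently, if `S` is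
posinormal (`sup_k |ω_k|/|ω_{k+1}| < ∞`), then `S ^ n` is posinormal for all `n ≥ 1`. -/
theorem weighted_shift_pow_posinormal {H : Type*} [NormedAddCommGroup H]
    [InnerProductSpace ℂ H] [CompleteSpace H] (e : HilbertBasis ℕ ℂ H)
    (ω : ℕ → ℂ) (hω : ∀ k, ω k ≠ 0) (S : H →L[ℂ] H)
    (hS : ∀ k, S (e k) = ω k • e (k + 1)) :
    (∀ n : ℕ, 1 ≤ n →
      ((∃ α : ℝ, 0 ≤ α ∧ ∀ x : H, ‖adjoint (S ^ n) x‖ ≤ α * ‖(S ^ n) x‖) ↔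
        ∃ C : ℝ, ∀ j : ℕ,
          (∏ i ∈ Finset.range n, ‖ω (j + i)‖) /
            (∏ i ∈ Finset.range n, ‖ω (n + j + i)‖) ≤ C)) ∧
    ((∃ C : ℝ, ∀ k : ℕ, ‖ω k‖ / ‖ω (k + 1)‖ ≤ C) →
      ∀ n : ℕ, 1 ≤ n →
        ∃ α : ℝ, 0 ≤ α ∧ ∀ x : H, ‖adjoint (S ^ n) x‖ ≤ α * ‖(S ^ n) x‖) := by
  have hpos (k : ℕ) : 0 < ‖ω k‖ := norm_pos_iff.mpr (hω k)
  have hposinormal (n : ℕ) : IsPosinormal (S ^ n) ↔ ∃ C : ℝ, ∀ j,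
      ∏ i ∈ Finset.range n, ‖ω (j + i)‖ ≤ C * ∏ i ∈ Finset.range n, ‖ω (n + j + i)‖ := by
    simpa only [norm_prod, add_comm n] using
      isPosinormal_iff_of_apply_basis e (pow_apply_of_apply_succ hS n)
  refine ⟨fun n _ => ?_, fun ⟨C, hC⟩ n _ => ?_⟩
  · refine (hposinormal n).trans ?_
    simp_rw [div_le_iff₀ (Finset.prod_pos fun i _ => hpos _)]
  · have hC₀ : 0 ≤ C := (div_pos (hpos 0) (hpos 1)).le.trans (hC 0)
    have hstep (k : ℕ) : ‖ω k‖ ≤ C * ‖ω (k + 1)‖ := (div_le_iff₀ (hpos _)).mp (hC k)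
    refine (hposinormal n).mpr ⟨C ^ (n * n), fun j => ?_⟩
    rw [add_comm n]
    exact prod_range_le_pow_mul_prod_range_add (fun _ => norm_nonneg _) hC₀ hstep n j
end

section
/- Let T be a posinormal bounded operator (TT* ≤ α²T*T for some α > 0) on a Hilbert space such that ran(TT*) ⊆ ran(T*T). Then T² is posinormal: ‖T*T*x‖ ≤ α²β‖TTx‖ for all x, where β is such that ‖TT*x‖ ≤ β‖T*Tx‖ for all x. -/
open ContinuousLinearMap

/-- If `T` is posinormal with constant `α > 0` and `‖T T* x‖ ≤ β ‖T* T x‖` for all `x`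
(equivalently `ran (T T*) ⊆ ran (T* T)`), then `T²` is posinormal:
`‖T* T* x‖ ≤ α² β ‖T T x‖` for all `x`. -/
theorem sq_posinormal_of_range_mul_le {H : Type*} [NormedAddCommGroup H]
    [InnerProductSpace ℂ H] [CompleteSpace H] (T : H →L[ℂ] H) (α β : ℝ)
    (hα : 0 < α) (hpos : ∀ x : H, ‖adjoint T x‖ ≤ α * ‖T x‖)
    (hβ : ∀ x : H, ‖T (adjoint T x)‖ ≤ β * ‖adjoint T (T x)‖) :
    ∀ x : H, ‖adjoint T (adjoint T x)‖ ≤ α ^ 2 * β * ‖T (T x)‖ := by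
  intro x
  -- The chain of bounds needs `0 ≤ β`, which `hβ x` only yields when `T* T x ≠ 0`.
  rcases eq_or_ne (adjoint T (T x)) 0 with hTTx | hTTx
  · have hTx : T x = 0 := by
      have : x ∈ (adjoint T ∘L T).ker := hTTx
      rwa [ker_adjoint_comp_self] at this
    have hT'x : adjoint T x = 0 := norm_le_zero_iff.mp (by simpa [hTx] using hpos x)
    simp [hTx, hT'x]
  · have hβ0 : 0 ≤ β :=
      nonneg_of_mul_nonneg_left ((norm_nonneg _).trans (hβ x)) (norm_pos_iff.mpr hTTx)
    calc ‖adjoint T (adjoint T x)‖ ≤ α * ‖T (adjoint T x)‖ := hpos _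
      _ ≤ α * (β * ‖adjoint T (T x)‖) := by gcongr; exact hβ x
      _ ≤ α * (β * (α * ‖T (T x)‖)) := by gcongr; exact hpos (T x)
      _ = α ^ 2 * β * ‖T (T x)‖ := by ring
end

section
/- If S and T are posinormal bounded operators on a Hilbert space and S* commutes with T (TS* = S*T), then ST is posinormal: ‖(ST)*x‖ ≤ α_T α_S ‖STx‖ for all x. -/
open ContinuousLinearMap

theorem mul_posinormal_of_adjoint_commute_general {H : Type*} [NormedAddCommGroup H]
    [InnerProductSpace ℂ H] [CompleteSpace H] (S T : H →L[ℂ] H) (αS αT : ℝ)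
    (hT : 0 ≤ αT)
    (hSpos : ∀ x : H, ‖adjoint S x‖ ≤ αS * ‖S x‖)
    (hTpos : ∀ x : H, ‖adjoint T x‖ ≤ αT * ‖T x‖)
    (hcomm : T ∘L adjoint S = adjoint S ∘L T) :
    ∀ x : H, ‖adjoint (S ∘L T) x‖ ≤ αT * αS * ‖(S ∘L T) x‖ := by
  intro x
  have hcomm_x : T (adjoint S x) = adjoint S (T x) := DFunLike.congr_fun hcomm x
  calc ‖adjoint (S ∘L T) x‖ = ‖adjoint T (adjoint S x)‖ := by rw [adjoint_comp]; rfl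
    _ ≤ αT * ‖T (adjoint S x)‖ := hTpos _
    _ = αT * ‖adjoint S (T x)‖ := by rw [hcomm_x]
    _ ≤ αT * (αS * ‖S (T x)‖) := by gcongr; exact hSpos _
    _ = αT * αS * ‖(S ∘L T) x‖ := by rw [mul_assoc]; rfl

/-- If `S` and `T` are posinormal with constants `αS`, `αT` and `S*` commutes with `T`,
then `S T` is posinormal: `‖(S T)* x‖ ≤ αT * αS * ‖(S T) x‖`. -/
theorem mul_posinormal_of_adjoint_commute {H : Type*} [NormedAddCommGroup H]
    [InnerProductSpace ℂ H] [CompleteSpace H] (S T : H →L[ℂ] H) (αS αT : ℝ)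
    (hS : 0 ≤ αS) (hT : 0 ≤ αT)
    (hSpos : ∀ x : H, ‖adjoint S x‖ ≤ αS * ‖S x‖)
    (hTpos : ∀ x : H, ‖adjoint T x‖ ≤ αT * ‖T x‖)
    (hcomm : T ∘L adjoint S = adjoint S ∘L T) :
    ∀ x : H, ‖adjoint (S ∘L T) x‖ ≤ αT * αS * ‖(S ∘L T) x‖ :=
  mul_posinormal_of_adjoint_commute_general S T αS αT hT hSpos hTpos hcomm
end

section
/- If T is a quasiposinormal bounded operator on a Hilbert space (ker(T) ⊆ ker(T*)), then T^n is quasiposinormal for every n ≥ 1: ker(T^n) ⊆ ker(T*^n). In fact ker(T^n) = ker(T) for all n ≥ 1. -/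
open ContinuousLinearMap

namespace Module.End

variable {R M : Type*} [Semiring R] [AddCommMonoid M] [Module R M]

theorem ker_le_ker_pow (f : End R M) {n : ℕ} (hn : 1 ≤ n) :
    LinearMap.ker f ≤ LinearMap.ker (f ^ n) := by
  obtain ⟨k, rfl⟩ := Nat.exists_eq_add_of_le' hn
  rw [pow_succ, mul_eq_comp]
  exact LinearMap.ker_le_ker_comp f (f ^ k)

theorem ker_pow_eq_ker_of_ker_sq_eq {f : End R M}
    (h : LinearMap.ker (f ^ 2) = LinearMap.ker f) {n : ℕ} (hn : 1 ≤ n) :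
    LinearMap.ker (f ^ n) = LinearMap.ker f := by
  induction n, hn using Nat.le_induction with
  | base => rw [pow_one]
  | succ n _ ih =>
    rw [pow_succ, mul_eq_comp, LinearMap.ker_comp, ih, ← LinearMap.ker_comp, ← mul_eq_comp,
      ← sq, h]

end Module.End

namespace ContinuousLinearMap

variable {𝕜 E : Type*} [RCLike 𝕜] [NormedAddCommGroup E] [InnerProductSpace 𝕜 E]
  [CompleteSpace E]

/-- If `T x ∈ ker T ⊆ ker T†`, then `x ∈ ker (T† T) = ker T`. -/
theorem ker_sq_eq_ker_of_ker_le_ker_adjoint {T : E →L[𝕜] E}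
    (hT : LinearMap.ker (T : E →ₗ[𝕜] E) ≤ LinearMap.ker ((adjoint T : E →L[𝕜] E) : E →ₗ[𝕜] E)) :
    LinearMap.ker ((T : E →ₗ[𝕜] E) ^ 2) = LinearMap.ker (T : E →ₗ[𝕜] E) := by
  refine le_antisymm (fun x hx ↦ ?_) (Module.End.ker_le_ker_pow _ one_le_two)
  rw [← ker_adjoint_comp_self]
  exact hT (by simpa [sq] using hx)

end ContinuousLinearMap

/-- If `T` is quasiposinormal (`ker T ⊆ ker T*`), then `T ^ n` is quasiposinormal for
every `n ≥ 1`, and in fact `ker (T ^ n) = ker T`. -/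
theorem pow_quasiposinormal {H : Type*} [NormedAddCommGroup H]
    [InnerProductSpace ℂ H] [CompleteSpace H] (T : H →L[ℂ] H)
    (h : LinearMap.ker (T : H →ₗ[ℂ] H) ≤ LinearMap.ker ((adjoint T : H →L[ℂ] H) : H →ₗ[ℂ] H)) :
    ∀ n : ℕ, 1 ≤ n →
      LinearMap.ker ((T ^ n : H →L[ℂ] H) : H →ₗ[ℂ] H) ≤
        LinearMap.ker (((adjoint T) ^ n : H →L[ℂ] H) : H →ₗ[ℂ] H) ∧
      LinearMap.ker ((T ^ n : H →L[ℂ] H) : H →ₗ[ℂ] H) = LinearMap.ker (T : H →ₗ[ℂ] H) := by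
  intro n hn
  have hker : LinearMap.ker ((T ^ n : H →L[ℂ] H) : H →ₗ[ℂ] H) =
      LinearMap.ker (T : H →ₗ[ℂ] H) := by
    rw [toLinearMap_pow]
    exact Module.End.ker_pow_eq_ker_of_ker_sq_eq (ker_sq_eq_ker_of_ker_le_ker_adjoint h) hn
  refine ⟨?_, hker⟩
  rw [hker, toLinearMap_pow]
  exact h.trans (Module.End.ker_le_ker_pow _ hn)
end
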